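/- Achievability for the surrogate BES source coding problem: for the ternary memoryless source with P(0) = P(1) = (1 − δ)/2, P(?) = δ, binary reproduction alphabet, and separable surrogate distortion d̄ (with d̄(0,0) = d̄(1,1) = 0, d̄(0,1) = d̄(1,0) = 1, d̄(?,0) = d̄(?,1) = 1/2), there exists a (k, M, d, ε) code with ε ≤ Σ_{j=0}^{k} C(k, j)·δ^j·(1 − δ)^{k−j} · ( 1 − 2^{−(k−j)}·⟨k−j choose ≤ ⌊kd − j/2⌋⟩ )^M, where ⟨n choose ≤ m⟩ = Σ_{i=0}^{m} C(n, i), with the conventions ⟨n choose ≤ m⟩ = 0 if m < 0 and ⟨n choose ≤ m⟩ = 2^n if m > n. -/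

import Mathlib

open scoped BigOperators

noncomputable section

/-- The ternary source on `{0, 1, ?}` (erasure symbol `none`):
`P(0) = P(1) = (1−δ)/2`, `P(?) = δ`. -/
def P3 (δ : ℝ) : Option Bool → ℝ :=
  fun x => if x = none then δ else (1 - δ) / 2

/-- The surrogate distortion of the erased-fair-coin-flips problem:
`d̄(0,0) = d̄(1,1) = 0`, `d̄(0,1) = d̄(1,0) = 1`, `d̄(?, z) = 1/2`. -/
def dbarBes : Option Bool → Bool → ℝ :=
  fun x z => match x with
    | none => 1 / 2
    | some b => if b = z then 0 else 1

/-- Sum of binomial coefficients `⟨n choose ≤ m⟩ = Σ_{i=0}^{m} C(n,i)`, with the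
conventions that it is `0` for `m < 0` and `2^n` for `m > n`. -/
def binosum (n : ℕ) (m : ℤ) : ℕ :=
  ∑ i ∈ Finset.range (n + 1), if (i : ℤ) ≤ m then n.choose i else 0

/-- Excess-distortion probability of the code `(f, c)` at blocklength `k`,
distortion threshold `d`, for the ternary memoryless source `P3 δ` and the separable
surrogate distortion `dbarBes`. -/
def excessBes (δ d : ℝ) (k M : ℕ) (f : (Fin k → Option Bool) → Fin M)
    (c : Fin M → (Fin k → Bool)) : ℝ :=
  ∑ x : Fin k → Option Bool, (∏ i, P3 δ (x i)) *
    (if d < (∑ i, dbarBes (x i) (c (f x) i)) / k then (1:ℝ) else 0)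

/-! Random coding: draw the `M` codewords independently and uniformly from `{0,1}^k` and encode
by minimum distortion. A source word `x` is then in excess iff every codeword is, which happens
with probability `(#{z | kd < d̄(x,z)} / 2^k)^M`, so some codebook does no worse than this average.
If `x` has `j` erasures then `d̄(x,z) = j/2 + #{unerased i | zᵢ ≠ xᵢ}`, so the words within
distortion `kd` of `x` are a Hamming ball of radius `⌊kd − j/2⌋` on the `k − j` unerased
coordinates times arbitrary values on the erased ones: `2^j ⟨k−j choose ≤ ⌊kd − j/2⌋⟩` of them.
Grouping source words by their number of erasures produces the binomial weights. -/

open Finset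

theorem Fintype.sum_prod_mul_apply_card_filter {ι β R : Type*} [Fintype ι] [DecidableEq ι]
    [Fintype β] [CommSemiring R] (w : ι → β → R) (P : ι → β → Prop) [∀ i, DecidablePred (P i)]
    (g : ℕ → R) :
    ∑ x : ι → β, (∏ i, w i (x i)) * g #{i | P i (x i)}
      = ∑ s : Finset ι, g #s * ∏ i, ∑ b with (P i b ↔ i ∈ s), w i b := by
  have filter_eq_iff (x : ι → β) (s : Finset ι) :
      ({i | P i (x i)} : Finset ι) = s ↔ ∀ i, (P i (x i) ↔ i ∈ s) := by
    simp [Finset.ext_iff]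
  calc ∑ x : ι → β, (∏ i, w i (x i)) * g #{i | P i (x i)}
      = ∑ x : ι → β, ∑ s : Finset ι,
          if ({i | P i (x i)} : Finset ι) = s then g #s * ∏ i, w i (x i) else 0 := by
        refine Finset.sum_congr rfl fun x _ => ?_
        rw [sum_ite_eq, mul_comm]
    _ = ∑ s : Finset ι, g #s * ∑ x : ι → β, ∏ i,
          if (P i (x i) ↔ i ∈ s) then w i (x i) else 0 := by
        rw [sum_comm]
        refine Finset.sum_congr rfl fun s _ => ?_
        simp only [mul_sum, Fintype.prod_ite_zero, filter_eq_iff, mul_ite, mul_zero]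
    _ = _ := by
        refine Finset.sum_congr rfl fun s _ => ?_
        simp only [sum_filter]
        rw [Fintype.prod_sum]

theorem exists_code_sum_excess_le_random_coding {X Z : Type*} [Fintype X] [Fintype Z]
    [Nonempty Z] {M : ℕ} (hM : 0 < M) (p : X → ℝ) (D : X → Z → ℝ) (t : ℝ) :
    ∃ (f : X → Fin M) (c : Fin M → Z),
      ∑ x, p x * (if t < D x (c (f x)) then 1 else 0)
        ≤ ∑ x, p x * ((#{z | t < D x z} : ℝ) / Fintype.card Z) ^ M := by
  have : Nonempty (Fin M) := ⟨⟨0, hM⟩⟩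
  choose enc henc using fun (c : Fin M → Z) x => Finite.exists_min fun m => D x (c m)
  have excess_eq_prod (c : Fin M → Z) (x : X) :
      (if t < D x (c (enc c x)) then (1 : ℝ) else 0) = ∏ m, if t < D x (c m) then 1 else 0 := by
    rw [Fintype.prod_boole]
    congr 1
    exact propext ⟨fun h m => h.trans_le (henc c x m), fun h => h _⟩
  have average : ∑ c : Fin M → Z, ∑ x, p x * (if t < D x (c (enc c x)) then 1 else 0)
      = ∑ _c : Fin M → Z, ∑ x, p x * ((#{z | t < D x z} : ℝ) / Fintype.card Z) ^ M := by
    have hZ : (Fintype.card Z : ℝ) ≠ 0 := Nat.cast_ne_zero.mpr Fintype.card_ne_zero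
    simp only [excess_eq_prod, sum_const, card_univ, Fintype.card_fun, Fintype.card_fin,
      nsmul_eq_mul, mul_sum]
    rw [sum_comm]
    refine Finset.sum_congr rfl fun x _ => ?_
    rw [← mul_sum, ← Fintype.sum_pow (fun z => if t < D x z then (1 : ℝ) else 0), card_filter]
    push_cast
    rw [div_pow, mul_left_comm, mul_div_cancel₀ _ (pow_ne_zero M hZ)]
  obtain ⟨c, -, hc⟩ := exists_le_of_sum_le univ_nonempty average.le
  exact ⟨enc c, c, hc⟩

theorem card_filter_card_filter_eq_some_not_le {ι : Type*} [Fintype ι] [DecidableEq ι]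
    (x : ι → Option Bool) (m : ℤ) :
    #{z : ι → Bool | (#{i | x i = some !(z i)} : ℤ) ≤ m}
      = 2 ^ #{i | x i = none} * binosum (Fintype.card ι - #{i | x i = none}) m := by
  set E : Finset ι := {i | x i = none}
  have coord (s : Finset ι) (i : ι) : #{b : Bool | x i = some !b ↔ i ∈ s}
      = if x i = none then (if i ∈ s then 0 else 2) else 1 := by
    rcases x i with _ | a <;> by_cases hi : i ∈ s <;> simp [hi] <;> cases a <;> decide
  have prod_coord (s : Finset ι) : ∏ i, #{b : Bool | x i = some !b ↔ i ∈ s}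
      = if ∀ i ∈ E, i ∉ s then 2 ^ #E else 0 := by
    simp only [coord, ← prod_filter, ← ite_not (p := _ ∈ s), prod_ite_zero, prod_const]
    rfl
  have subsets : ({s | ∀ i ∈ E, i ∉ s} : Finset (Finset ι)) = Eᶜ.powerset := by
    ext s
    simp only [mem_filter, mem_univ, true_and, mem_powerset, subset_iff, mem_compl]
    exact ⟨fun h i hi hiE => h i hiE hi, fun h i hiE hi => h hi hiE⟩
  have key := Fintype.sum_prod_mul_apply_card_filter (fun _ _ => (1 : ℕ))
    (fun i b => x i = some !b) (fun l => if (l : ℤ) ≤ m then 1 else 0)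
  simp only [prod_const_one, sum_const, smul_eq_mul, mul_one, prod_coord, mul_ite,
    mul_zero, ← sum_filter, subsets, ← sum_mul] at key
  rw [key, card_filter, sum_powerset_apply_card (fun l => if (l : ℤ) ≤ m then 1 else 0),
    card_compl, binosum, mul_comm]
  simp only [smul_eq_mul, mul_ite, mul_one, mul_zero]

theorem dbarBes_eq (o : Option Bool) (b : Bool) :
    dbarBes o b = (if o = none then 1 else 0) / 2 + if o = some !b then 1 else 0 := by
  rcases o with _ | _ | _ <;> cases b <;> simp [dbarBes]

theorem sum_dbarBes {ι : Type*} [Fintype ι] (x : ι → Option Bool) (z : ι → Bool) :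
    ∑ i, dbarBes (x i) (z i) = (#{i | x i = none} : ℝ) / 2 + #{i | x i = some !(z i)} := by
  simp only [dbarBes_eq, sum_add_distrib, ← sum_div, sum_boole]

theorem card_filter_lt_sum_dbarBes_div {ι : Type*} [Fintype ι] [DecidableEq ι]
    (x : ι → Option Bool) (t : ℝ) :
    (#{z : ι → Bool | t < ∑ i, dbarBes (x i) (z i)} : ℝ) / Fintype.card (ι → Bool)
      = 1 - (2 ^ (Fintype.card ι - #{i | x i = none}))⁻¹ *
          (binosum (Fintype.card ι - #{i | x i = none}) ⌊t - #{i | x i = none} / 2⌋ : ℝ) := by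
  set E : Finset ι := {i | x i = none}
  have within_iff (z : ι → Bool) :
      ∑ i, dbarBes (x i) (z i) ≤ t ↔ (#{i | x i = some !(z i)} : ℤ) ≤ ⌊t - #E / 2⌋ := by
    rw [Int.le_floor, sum_dbarBes]
    push_cast
    constructor <;> intro h <;> linarith
  have card_within : #{z : ι → Bool | ∑ i, dbarBes (x i) (z i) ≤ t}
      = 2 ^ #E * binosum (Fintype.card ι - #E) ⌊t - #E / 2⌋ := by
    simp only [within_iff]
    exact card_filter_card_filter_eq_some_not_le x _
  have split : (#{z : ι → Bool | ∑ i, dbarBes (x i) (z i) ≤ t} : ℝ)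
      + #{z : ι → Bool | t < ∑ i, dbarBes (x i) (z i)} = Fintype.card (ι → Bool) := by
    simpa only [not_le, Nat.cast_add, card_univ] using congrArg (Nat.cast (R := ℝ))
      (card_filter_add_card_filter_not (s := univ)
        fun z : ι → Bool => ∑ i, dbarBes (x i) (z i) ≤ t)
  have card_pow : (Fintype.card (ι → Bool) : ℝ) = 2 ^ #E * 2 ^ (Fintype.card ι - #E) := by
    rw [← pow_add, Nat.add_sub_cancel' (card_le_univ E)]
    simp
  rw [eq_sub_of_add_eq' split, card_within, card_pow]
  push_cast
  field_simp

theorem sum_prod_P3_mul_apply_card_filter_eq_none {ι : Type*} [Fintype ι] [DecidableEq ι]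
    (δ : ℝ) (g : ℕ → ℝ) :
    ∑ x : ι → Option Bool, (∏ i, P3 δ (x i)) * g #{i | x i = none}
      = ∑ j ∈ range (Fintype.card ι + 1),
          (Fintype.card ι).choose j * δ ^ j * (1 - δ) ^ (Fintype.card ι - j) * g j := by
  have coord (s : Finset ι) (i : ι) :
      ∑ o with (o = none ↔ i ∈ s), P3 δ o = if i ∈ s then δ else 1 - δ := by
    by_cases hi : i ∈ s <;> simp [hi, sum_filter, Fintype.sum_option, P3]
    ring
  have prod_coord (s : Finset ι) :
      ∏ i, (if i ∈ s then δ else 1 - δ) = δ ^ #s * (1 - δ) ^ (Fintype.card ι - #s) := by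
    rw [prod_ite, prod_const, prod_const, filter_notMem_eq_sdiff, ← compl_eq_univ_sdiff,
      card_compl]
    simp
  rw [Fintype.sum_prod_mul_apply_card_filter (fun _ => P3 δ) (fun _ o => o = none) g]
  simp only [coord, prod_coord]
  rw [← powerset_univ,
    sum_powerset_apply_card fun j => g j * (δ ^ j * (1 - δ) ^ (Fintype.card ι - j)), card_univ]
  refine Finset.sum_congr rfl fun j _ => ?_
  rw [nsmul_eq_mul]
  ring

theorem achievability_surrogate_BES_general
    (δ d : ℝ) (k M : ℕ) (hk : 0 < k) (hM : 0 < M) :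
    ∃ (f : (Fin k → Option Bool) → Fin M) (c : Fin M → (Fin k → Bool)),
      excessBes δ d k M f c
        ≤ ∑ j ∈ Finset.range (k + 1),
            (k.choose j : ℝ) * δ ^ j * (1 - δ) ^ (k - j) *
              (1 - ((2 : ℝ) ^ (k - j))⁻¹ *
                (binosum (k - j) ⌊(k : ℝ) * d - (j : ℝ) / 2⌋ : ℝ)) ^ M := by
  obtain ⟨f, c, hfc⟩ := exists_code_sum_excess_le_random_coding hM
    (fun x : Fin k → Option Bool => ∏ i, P3 δ (x i))
    (fun x (z : Fin k → Bool) => ∑ i, dbarBes (x i) (z i)) (k * d)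
  refine ⟨f, c, ?_⟩
  have hk' : (0 : ℝ) < k := Nat.cast_pos.mpr hk
  calc excessBes δ d k M f c
      = ∑ x, (∏ i, P3 δ (x i)) * (if k * d < ∑ i, dbarBes (x i) (c (f x) i) then 1 else 0) := by
        simp only [excessBes, lt_div_iff₀ hk', mul_comm d]
    _ ≤ _ := hfc
    _ = _ := by
        simp only [card_filter_lt_sum_dbarBes_div, Fintype.card_fin]
        simpa only [Fintype.card_fin] using
          sum_prod_P3_mul_apply_card_filter_eq_none (ι := Fin k) δ fun j =>
            (1 - ((2 : ℝ) ^ (k - j))⁻¹ * (binosum (k - j) ⌊(k : ℝ) * d - (j : ℝ) / 2⌋ : ℝ)) ^ M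

/-- **Achievability for the surrogate BES source coding problem** (Theorem 7):
for the ternary memoryless source with binary reproduction alphabet and surrogate
distortion `d̄`, there exists a `(k, M, d, ε)` code with
`ε ≤ Σ_{j=0}^{k} C(k,j) δ^j (1−δ)^{k−j} (1 − 2^{−(k−j)} ⟨k−j choose ≤ ⌊kd − j/2⌋⟩)^M`. -/
theorem achievability_surrogate_BES
    (δ d : ℝ) (hδ0 : 0 < δ) (hδ1 : δ < 1) (hd : 0 ≤ d)
    (k M : ℕ) (hk : 0 < k) (hM : 0 < M) :
    ∃ (f : (Fin k → Option Bool) → Fin M) (c : Fin M → (Fin k → Bool)),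
      excessBes δ d k M f c
        ≤ ∑ j ∈ Finset.range (k + 1),
            (k.choose j : ℝ) * δ ^ j * (1 - δ) ^ (k - j) *
              (1 - ((2 : ℝ) ^ (k - j))⁻¹ *
                (binosum (k - j) ⌊(k : ℝ) * d - (j : ℝ) / 2⌋ : ℝ)) ^ M :=
  achievability_surrogate_BES_general δ d k M hk hM
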